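/- In the one-hidden-layer ReLU ANN setting with constant target α, let Θ : Ω × ℕ_0 → ℝ^{3H+1} be a stochastic process on a probability space (Ω, F, P) with Θ_0(Ω) ⊆ [−c,c]^{3H+1} for some c > 0, satisfying Θ_{n+1} = Θ_n − γ G(Θ_n) with γ ∈ (0, (12c²(3H+1) + 32α² + 2)^{-1}]. Then sup_{ω∈Ω} sup_{n∈ℕ_0} ‖Θ_n(ω)‖ ≤ (3c²(3H+1) + 8α²)^{1/2}, for every ω ∈ Ω it holds limsup_{n→∞} L_∞(Θ_n(ω)) = 0, and limsup_{n→∞} E[L_∞(Θ_n)] = 0. -/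

import Mathlib

open MeasureTheory

noncomputable section

/-- weight parameters -/
def wp (H : ℕ) (φ : EuclideanSpace ℝ (Fin (3*H+1))) (j : Fin H) : ℝ := φ ⟨j.1, by omega⟩
/-- bias parameters -/
def bp (H : ℕ) (φ : EuclideanSpace ℝ (Fin (3*H+1))) (j : Fin H) : ℝ := φ ⟨H + j.1, by omega⟩
/-- outer weight parameters -/
def vp (H : ℕ) (φ : EuclideanSpace ℝ (Fin (3*H+1))) (j : Fin H) : ℝ := φ ⟨2*H + j.1, by omega⟩
/-- output bias -/
def cp (H : ℕ) (φ : EuclideanSpace ℝ (Fin (3*H+1))) : ℝ := φ ⟨3*H, by omega⟩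

/-- realization of the one-hidden-layer ReLU network -/
def realization (H : ℕ) (φ : EuclideanSpace ℝ (Fin (3*H+1))) (x : ℝ) : ℝ :=
  cp H φ + ∑ j : Fin H, vp H φ j * max (wp H φ j * x + bp H φ j) 0

/-- risk with constant target α -/
def risk (H : ℕ) (α : ℝ) (φ : EuclideanSpace ℝ (Fin (3*H+1))) : ℝ :=
  ∫ y in (0:ℝ)..1, (realization H φ y - α)^2

/-- activity interval I_j^φ -/
def actSet (H : ℕ) (φ : EuclideanSpace ℝ (Fin (3*H+1))) (j : Fin H) : Set ℝ :=
  {x | x ∈ Set.Icc (0:ℝ) 1 ∧ 0 < wp H φ j * x + bp H φ j}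

/-- generalized gradient G -/
def grad (H : ℕ) (α : ℝ) (φ : EuclideanSpace ℝ (Fin (3*H+1))) :
    EuclideanSpace ℝ (Fin (3*H+1)) := WithLp.toLp 2 fun (i : Fin (3*H+1)) =>
  if h : i.1 < H then
    2 * vp H φ ⟨i.1, h⟩ * ∫ x in actSet H φ ⟨i.1, h⟩, x * (realization H φ x - α)
  else if h2 : i.1 < 2*H then
    2 * vp H φ ⟨i.1 - H, by omega⟩ * ∫ x in actSet H φ ⟨i.1 - H, by omega⟩, (realization H φ x - α)
  else if h3 : i.1 < 3*H then
    2 * ∫ x in (0:ℝ)..1,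
      max (wp H φ ⟨i.1 - 2*H, by omega⟩ * x + bp H φ ⟨i.1 - 2*H, by omega⟩) 0 * (realization H φ x - α)
  else 2 * ∫ x in (0:ℝ)..1, (realization H φ x - α)

/-- Lyapunov function V -/
def lyap (H : ℕ) (α : ℝ) (φ : EuclideanSpace ℝ (Fin (3*H+1))) : ℝ :=
  ‖φ‖^2 + (cp H φ - 2*α)^2

/-!
`V(φ) = ‖φ‖² + (c(φ) - 2α)²` is a Lyapunov function for the gradient descent. Positive
homogeneity of the ReLU gives `w_j G_{w_j} + b_j G_{b_j} = v_j G_{v_j}`, whence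
`⟪φ, G φ⟫ + (c(φ) - 2α) G_c(φ) = 4 L(φ)`; together with the Cauchy–Schwarz bound
`‖G φ‖² ≤ (8‖φ‖² + 4) L(φ)` this yields `V(φ - γ G φ) ≤ V(φ) - 4γ L(φ)` whenever
`γ (4 V(φ) + 2) ≤ 1`. So `V` decreases along every trajectory, which bounds `‖Θ_n‖`, and the risks
are summable, hence tend to `0`; the uniform bound `4γ L(Θ_n) ≤ V(Θ_0)` lets dominated
convergence pass to the expectation.
-/

open Set

open Finset in
theorem sum_fin_three_mul_add_one {M : Type*} [AddCommMonoid M] (H : ℕ) (F : Fin (3*H+1) → M) :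
    ∑ i, F i = ∑ j : Fin H, F ⟨j, by omega⟩ + ∑ j : Fin H, F ⟨H + j, by omega⟩
      + ∑ j : Fin H, F ⟨2*H + j, by omega⟩ + F ⟨3*H, by omega⟩ := by
  set G : ℕ → M := fun i => if h : i < 3*H+1 then F ⟨i, h⟩ else 0
  rw [sum_fin_eq_sum_range]
  change ∑ i ∈ range (3*H+1), G i = _
  rw [show range (3*H+1) = range (H + H + H + 1) by ring_nf, sum_range_succ,
    sum_range_add, sum_range_add, ← Fin.sum_univ_eq_sum_range, ← Fin.sum_univ_eq_sum_range,
    ← Fin.sum_univ_eq_sum_range (fun j => G (H + H + j))]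
  have h₁ : ∀ j : Fin H, (j : ℕ) < 3*H+1 := by omega
  have h₂ : ∀ j : Fin H, H + j < 3*H+1 := by omega
  have h₃ : ∀ j : Fin H, 2*H + j < 3*H+1 := by omega
  simp only [G, h₁, h₂, h₃, Nat.lt_succ_self, dite_true, show H + H + H = 3*H by ring,
    show ∀ j, H + H + j = 2*H + j by intro; ring]

theorem norm_sq_le_card_mul_sq_of_abs_le {ι : Type*} [Fintype ι] {x : EuclideanSpace ℝ ι} {c : ℝ}
    (hx : ∀ i, |x i| ≤ c) : ‖x‖ ^ 2 ≤ Fintype.card ι * c ^ 2 := by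
  rw [EuclideanSpace.real_norm_sq_eq]
  calc ∑ i, x i ^ 2 ≤ ∑ _i : ι, c ^ 2 :=
        Finset.sum_le_sum fun i _ => sq_le_sq' (abs_le.1 (hx i)).1 (abs_le.1 (hx i)).2
    _ = Fintype.card ι * c ^ 2 := by simp

theorem summable_of_succ_add_mul_le {V r : ℕ → ℝ} {κ : ℝ} (hκ : 0 < κ) (hV : ∀ n, 0 ≤ V n)
    (hr : ∀ n, 0 ≤ r n) (h : ∀ n, V (n + 1) + κ * r n ≤ V n) : Summable r := by
  refine summable_of_sum_range_le (c := V 0 / κ) hr fun n => (le_div_iff₀' hκ).2 ?_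
  calc κ * ∑ k ∈ Finset.range n, r k = ∑ k ∈ Finset.range n, κ * r k := Finset.mul_sum _ _ _
    _ ≤ ∑ k ∈ Finset.range n, (V k - V (k + 1)) := Finset.sum_le_sum fun k _ => by linarith [h k]
    _ = V 0 - V n := Finset.sum_range_sub' V n
    _ ≤ V 0 := by linarith [hV n]

theorem intervalIntegral_eq_setIntegral_Icc {a b : ℝ} (hab : a ≤ b) (f : ℝ → ℝ) :
    ∫ x in a..b, f x = ∫ x in Icc a b, f x := by
  rw [intervalIntegral.integral_of_le hab, integral_Icc_eq_integral_Ioc]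

theorem sq_integral_mul_le {X : Type*} [MeasurableSpace X] {μ : Measure X} {f g : X → ℝ}
    (hf : Integrable (fun x => f x ^ 2) μ) (hg : Integrable (fun x => g x ^ 2) μ)
    (hfg : Integrable (fun x => f x * g x) μ) :
    (∫ x, f x * g x ∂μ) ^ 2 ≤ (∫ x, f x ^ 2 ∂μ) * ∫ x, g x ^ 2 ∂μ := by
  have hquad : ∀ t : ℝ,
      0 ≤ (∫ x, f x ^ 2 ∂μ) * (t * t) + 2 * (∫ x, f x * g x ∂μ) * t + ∫ x, g x ^ 2 ∂μ := by
    intro t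
    calc 0 ≤ ∫ x, (t * f x + g x) ^ 2 ∂μ := integral_nonneg fun x => sq_nonneg _
      _ = ∫ x, (t * t) * f x ^ 2 + (2 * t) * (f x * g x) + g x ^ 2 ∂μ := by
        congr with x; ring
      _ = _ := by
        have hfg' : Integrable (fun x => (t * t) * f x ^ 2 + (2 * t) * (f x * g x)) μ :=
          (hf.const_mul _).add (hfg.const_mul _)
        rw [integral_add hfg' hg, integral_add (hf.const_mul _) (hfg.const_mul _),
          integral_const_mul, integral_const_mul]
        ring
  have := discrim_le_zero hquad
  unfold discrim at this
  linarith

theorem sq_setIntegral_mul_le {s : Set ℝ} (hsub : s ⊆ Icc 0 1) {g f : ℝ → ℝ}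
    (hg : Continuous g) (hf : Continuous f) {M : ℝ} (hM : ∀ x ∈ Icc (0:ℝ) 1, g x ^ 2 ≤ M) :
    (∫ x in s, g x * f x) ^ 2 ≤ M * ∫ x in Icc 0 1, f x ^ 2 := by
  have hM₀ : 0 ≤ M := (sq_nonneg _).trans (hM 0 (by simp))
  have hs : volume s < ⊤ := (measure_mono hsub).trans_lt measure_Icc_lt_top
  have hg₂ : ∫ x in s, g x ^ 2 ≤ M :=
    calc ∫ x in s, g x ^ 2 ≤ M * volume.real s := (Real.le_norm_self _).trans <|
          norm_setIntegral_le_of_norm_le_const hs fun x hx => by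
            rw [Real.norm_of_nonneg (sq_nonneg _)]
            exact hM x (hsub hx)
      _ ≤ M * 1 := by
          gcongr
          calc volume.real s ≤ volume.real (Icc (0:ℝ) 1) :=
                measureReal_mono hsub measure_Icc_lt_top.ne
            _ = 1 := by simp
      _ = M := mul_one M
  have hf₂ : ∫ x in s, f x ^ 2 ≤ ∫ x in Icc 0 1, f x ^ 2 :=
    setIntegral_mono_set (hf.pow 2).integrableOn_Icc (ae_of_all _ fun x => sq_nonneg _)
      hsub.eventuallyLE
  calc (∫ x in s, g x * f x) ^ 2 ≤ (∫ x in s, g x ^ 2) * ∫ x in s, f x ^ 2 :=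
        sq_integral_mul_le ((hg.pow 2).integrableOn_Icc.mono_set hsub)
          ((hf.pow 2).integrableOn_Icc.mono_set hsub) ((hg.mul hf).integrableOn_Icc.mono_set hsub)
    _ ≤ M * ∫ x in Icc 0 1, f x ^ 2 :=
        mul_le_mul hg₂ hf₂ (integral_nonneg fun x => sq_nonneg _) hM₀

theorem sq_setIntegral_le {s : Set ℝ} (hsub : s ⊆ Icc 0 1) {f : ℝ → ℝ} (hf : Continuous f) :
    (∫ x in s, f x) ^ 2 ≤ ∫ x in Icc 0 1, f x ^ 2 := by
  simpa using sq_setIntegral_mul_le (g := fun _ => 1) (M := 1) hsub continuous_const hf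
    fun _ _ => by norm_num

theorem integral_max_mul_eq (w b : ℝ) {f : ℝ → ℝ} (hf : Continuous f) :
    ∫ x in (0:ℝ)..1, max (w * x + b) 0 * f x
      = w * (∫ x in Icc 0 1 ∩ {x | 0 < w * x + b}, x * f x)
        + b * ∫ x in Icc 0 1 ∩ {x | 0 < w * x + b}, f x := by
  have hrelu : (fun x => max (w * x + b) 0 * f x)
      = {x | 0 < w * x + b}.indicator fun x => w * (x * f x) + b * f x := by
    ext x
    by_cases hx : 0 < w * x + b
    · simp only [indicator_of_mem (show x ∈ {x | 0 < w * x + b} from hx), max_eq_left hx.le]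
      ring
    · simp [not_lt.1 hx]
  have hint : ∀ {h : ℝ → ℝ}, Continuous h → IntegrableOn h (Icc 0 1 ∩ {x | 0 < w * x + b}) :=
    fun hh => hh.integrableOn_Icc.mono_set inter_subset_left
  rw [intervalIntegral_eq_setIntegral_Icc zero_le_one, hrelu,
    setIntegral_indicator (measurableSet_lt measurable_const (by fun_prop)),
    integral_add (hint (by fun_prop)) (hint (by fun_prop)), integral_const_mul, integral_const_mul]

section Parameters

variable {H : ℕ}

theorem norm_sq_eq_params (φ : EuclideanSpace ℝ (Fin (3*H+1))) :
    ‖φ‖ ^ 2 = ∑ j, wp H φ j ^ 2 + ∑ j, bp H φ j ^ 2 + ∑ j, vp H φ j ^ 2 + cp H φ ^ 2 := by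
  rw [EuclideanSpace.real_norm_sq_eq, sum_fin_three_mul_add_one]
  rfl

theorem inner_eq_params (φ ψ : EuclideanSpace ℝ (Fin (3*H+1))) :
    inner ℝ φ ψ = ∑ j, wp H φ j * wp H ψ j + ∑ j, bp H φ j * bp H ψ j
      + ∑ j, vp H φ j * vp H ψ j + cp H φ * cp H ψ := by
  rw [PiLp.inner_apply, sum_fin_three_mul_add_one]
  simp only [wp, bp, vp, cp, RCLike.inner_apply, conj_trivial, mul_comm]

theorem cp_sq_le_norm_sq (φ : EuclideanSpace ℝ (Fin (3*H+1))) : cp H φ ^ 2 ≤ ‖φ‖ ^ 2 := by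
  rw [norm_sq_eq_params]
  exact le_add_of_nonneg_left (by positivity)

theorem cp_sub_smul (φ ψ : EuclideanSpace ℝ (Fin (3*H+1))) (γ : ℝ) :
    cp H (φ - γ • ψ) = cp H φ - γ * cp H ψ := by
  simp [cp]

variable {α : ℝ} (φ : EuclideanSpace ℝ (Fin (3*H+1)))

theorem lyap_nonneg : 0 ≤ lyap H α φ := by
  unfold lyap
  positivity

theorem norm_sq_le_lyap : ‖φ‖ ^ 2 ≤ lyap H α φ :=
  le_add_of_nonneg_right (sq_nonneg _)

theorem lyap_le : lyap H α φ ≤ 3 * ‖φ‖ ^ 2 + 8 * α ^ 2 := by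
  unfold lyap
  nlinarith [cp_sq_le_norm_sq φ, sq_nonneg (cp H φ + 2*α)]

theorem wp_grad (j : Fin H) :
    wp H (grad H α φ) j = 2 * vp H φ j * ∫ x in actSet H φ j, x * (realization H φ x - α) := by
  simp [wp, grad]

theorem bp_grad (j : Fin H) :
    bp H (grad H α φ) j = 2 * vp H φ j * ∫ x in actSet H φ j, (realization H φ x - α) := by
  simp [bp, grad, show H + (j : ℕ) < 2*H by omega]

theorem vp_grad (j : Fin H) :
    vp H (grad H α φ) j =
      2 * ∫ x in (0:ℝ)..1, max (wp H φ j * x + bp H φ j) 0 * (realization H φ x - α) := by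
  simp [vp, grad, show ¬ 2*H + (j : ℕ) < H by omega, show 2*H + (j : ℕ) < 3*H by omega]

theorem cp_grad : cp H (grad H α φ) = 2 * ∫ x in (0:ℝ)..1, (realization H φ x - α) := by
  simp [cp, grad, show ¬ 3*H < H by omega, show ¬ 3*H < 2*H by omega]

end Parameters

section Network

variable {H : ℕ} {α : ℝ} (φ : EuclideanSpace ℝ (Fin (3*H+1)))

theorem continuous_realization : Continuous (realization H φ) := by
  unfold realization
  fun_prop

theorem continuous_realization_sub : Continuous fun x => realization H φ x - α :=
  (continuous_realization φ).sub continuous_const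

theorem continuous_risk : Continuous (risk H α) := by
  unfold risk
  refine intervalIntegral.continuous_parametric_intervalIntegral_of_continuous' ?_ 0 1
  unfold realization cp vp wp bp
  fun_prop

theorem risk_eq_setIntegral_Icc : risk H α φ = ∫ x in Icc 0 1, (realization H φ x - α) ^ 2 := by
  rw [risk, intervalIntegral_eq_setIntegral_Icc zero_le_one]

theorem risk_nonneg : 0 ≤ risk H α φ := by
  rw [risk_eq_setIntegral_Icc]
  exact integral_nonneg fun x => sq_nonneg _

theorem actSet_eq (j : Fin H) :
    actSet H φ j = Icc 0 1 ∩ {x | 0 < wp H φ j * x + bp H φ j} := rfl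

theorem actSet_subset_Icc (j : Fin H) : actSet H φ j ⊆ Icc 0 1 := fun _ hx => hx.1

theorem wp_mul_wp_grad_add_bp_mul_bp_grad (j : Fin H) :
    wp H φ j * wp H (grad H α φ) j + bp H φ j * bp H (grad H α φ) j
      = vp H φ j * vp H (grad H α φ) j := by
  rw [wp_grad, bp_grad, vp_grad,
    integral_max_mul_eq _ _ (continuous_realization_sub φ), actSet_eq]
  ring

theorem two_mul_risk_eq : 2 * risk H α φ
    = ∑ j, vp H φ j * vp H (grad H α φ) j + (cp H φ - α) * cp H (grad H α φ) := by
  set f := fun x => realization H φ x - α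
  have hf : Continuous f := continuous_realization_sub φ
  have hsq : ∀ x, (realization H φ x - α) ^ 2
      = ∑ j, vp H φ j * (max (wp H φ j * x + bp H φ j) 0 * f x) + (cp H φ - α) * f x := by
    intro x
    simp only [f, ← mul_assoc, ← Finset.sum_mul, ← add_mul]
    rw [realization]
    ring
  simp only [risk, hsq, vp_grad, cp_grad]
  rw [intervalIntegral.integral_add, intervalIntegral.integral_finsetSum]
  · simp only [intervalIntegral.integral_const_mul, f]
    rw [mul_add, Finset.mul_sum]
    congr 1
    · exact Finset.sum_congr rfl fun j _ => by ring
    · ring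
  all_goals intros; exact (by fun_prop : Continuous _).intervalIntegrable 0 1

theorem inner_grad_add_mul_cp_grad :
    inner ℝ φ (grad H α φ) + (cp H φ - 2 * α) * cp H (grad H α φ) = 4 * risk H α φ := by
  rw [inner_eq_params, ← Finset.sum_add_distrib,
    Finset.sum_congr rfl fun j _ => wp_mul_wp_grad_add_bp_mul_bp_grad φ j]
  linear_combination 2 * (two_mul_risk_eq φ).symm

theorem max_mul_add_zero_sq_le (w b : ℝ) {x : ℝ} (hx : x ∈ Icc (0:ℝ) 1) :
    max (w * x + b) 0 ^ 2 ≤ 2 * w ^ 2 + 2 * b ^ 2 := by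
  have hrelu : max (w * x + b) 0 ^ 2 ≤ (w * x + b) ^ 2 := by
    rcases le_total (w * x + b) 0 with h | h
    · rw [max_eq_right h, sq, zero_mul]
      positivity
    · rw [max_eq_left h]
  have hx₂ : x ^ 2 ≤ 1 := by nlinarith [hx.1, hx.2]
  nlinarith [sq_nonneg (w * x - b), mul_le_mul_of_nonneg_left hx₂ (sq_nonneg w)]

theorem wp_grad_sq_le (j : Fin H) :
    wp H (grad H α φ) j ^ 2 ≤ 4 * vp H φ j ^ 2 * risk H α φ := by
  have hint := sq_setIntegral_mul_le (g := fun x => x) (M := 1) (actSet_subset_Icc φ j)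
    continuous_id (continuous_realization_sub (α := α) φ)
    fun x hx => by nlinarith [hx.1, hx.2]
  rw [wp_grad, risk_eq_setIntegral_Icc, mul_pow, mul_pow]
  linarith [mul_le_mul_of_nonneg_left hint (sq_nonneg (vp H φ j))]

theorem bp_grad_sq_le (j : Fin H) :
    bp H (grad H α φ) j ^ 2 ≤ 4 * vp H φ j ^ 2 * risk H α φ := by
  have hint := sq_setIntegral_le (actSet_subset_Icc φ j) (continuous_realization_sub (α := α) φ)
  rw [bp_grad, risk_eq_setIntegral_Icc, mul_pow, mul_pow]
  linarith [mul_le_mul_of_nonneg_left hint (sq_nonneg (vp H φ j))]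

theorem vp_grad_sq_le (j : Fin H) :
    vp H (grad H α φ) j ^ 2 ≤ 8 * (wp H φ j ^ 2 + bp H φ j ^ 2) * risk H α φ := by
  have hint := sq_setIntegral_mul_le subset_rfl (by fun_prop)
    (continuous_realization_sub (α := α) φ) fun _ hx =>
      max_mul_add_zero_sq_le (wp H φ j) (bp H φ j) hx
  rw [vp_grad, risk_eq_setIntegral_Icc, intervalIntegral_eq_setIntegral_Icc zero_le_one, mul_pow]
  linarith

theorem cp_grad_sq_le : cp H (grad H α φ) ^ 2 ≤ 4 * risk H α φ := by
  have hint := sq_setIntegral_le subset_rfl (continuous_realization_sub (α := α) φ)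
  rw [cp_grad, risk_eq_setIntegral_Icc, intervalIntegral_eq_setIntegral_Icc zero_le_one, mul_pow]
  linarith

theorem norm_grad_sq_le : ‖grad H α φ‖ ^ 2 ≤ (8 * ‖φ‖ ^ 2 + 4) * risk H α φ := by
  have hr := risk_nonneg (α := α) φ
  calc ‖grad H α φ‖ ^ 2
      ≤ ∑ j, 4 * vp H φ j ^ 2 * risk H α φ + ∑ j, 4 * vp H φ j ^ 2 * risk H α φ
        + ∑ j, 8 * (wp H φ j ^ 2 + bp H φ j ^ 2) * risk H α φ + 4 * risk H α φ := by
        rw [norm_sq_eq_params]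
        gcongr with j _ j _ j _
        · exact wp_grad_sq_le φ j
        · exact bp_grad_sq_le φ j
        · exact vp_grad_sq_le φ j
        · exact cp_grad_sq_le φ
    _ = (8 * (∑ j, wp H φ j ^ 2 + ∑ j, bp H φ j ^ 2 + ∑ j, vp H φ j ^ 2) + 4) * risk H α φ := by
        simp only [← Finset.sum_mul, ← Finset.mul_sum, Finset.sum_add_distrib, mul_add]
        ring
    _ ≤ (8 * ‖φ‖ ^ 2 + 4) * risk H α φ := by
        rw [norm_sq_eq_params]
        exact mul_le_mul_of_nonneg_right (by linarith [sq_nonneg (cp H φ)]) hr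

theorem lyap_sub_smul_grad_add_le {γ : ℝ} (hγ : 0 ≤ γ) (hγV : γ * (4 * lyap H α φ + 2) ≤ 1) :
    lyap H α (φ - γ • grad H α φ) + 4 * γ * risk H α φ ≤ lyap H α φ := by
  set G := grad H α φ
  have hr := risk_nonneg (α := α) φ
  have hexp : lyap H α (φ - γ • G) = lyap H α φ
      - 2 * γ * (inner ℝ φ G + (cp H φ - 2 * α) * cp H G) + γ ^ 2 * (‖G‖ ^ 2 + cp H G ^ 2) := by
    rw [lyap, lyap, cp_sub_smul, norm_sub_sq_real, real_inner_smul_right, norm_smul,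
      Real.norm_eq_abs, mul_pow, sq_abs]
    ring
  have hG : ‖G‖ ^ 2 + cp H G ^ 2 ≤ (16 * ‖φ‖ ^ 2 + 8) * risk H α φ := by
    linarith [cp_sq_le_norm_sq G, norm_grad_sq_le (α := α) φ]
  have hγφ : γ * (16 * ‖φ‖ ^ 2 + 8) ≤ 4 := by
    nlinarith [mul_le_mul_of_nonneg_left (norm_sq_le_lyap (α := α) φ) hγ]
  have hquad : γ ^ 2 * (‖G‖ ^ 2 + cp H G ^ 2) ≤ 4 * γ * risk H α φ :=
    calc γ ^ 2 * (‖G‖ ^ 2 + cp H G ^ 2) ≤ γ ^ 2 * ((16 * ‖φ‖ ^ 2 + 8) * risk H α φ) := by gcongr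
      _ = γ * (16 * ‖φ‖ ^ 2 + 8) * (γ * risk H α φ) := by ring
      _ ≤ 4 * (γ * risk H α φ) := by gcongr
      _ = 4 * γ * risk H α φ := by ring
  rw [hexp, inner_grad_add_mul_cp_grad]
  linarith

end Network

section GradientDescent

variable {H : ℕ} {α γ : ℝ} {θ : ℕ → EuclideanSpace ℝ (Fin (3*H+1))}

theorem lyap_le_lyap_zero (hγ : 0 ≤ γ) (hθ : ∀ n, θ (n + 1) = θ n - γ • grad H α (θ n))
    (hγV : γ * (4 * lyap H α (θ 0) + 2) ≤ 1) (n : ℕ) : lyap H α (θ n) ≤ lyap H α (θ 0) := by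
  induction n with
  | zero => rfl
  | succ n ih =>
    have hstep := lyap_sub_smul_grad_add_le (θ n) hγ
      ((mul_le_mul_of_nonneg_left (by linarith) hγ).trans hγV)
    rw [hθ]
    nlinarith [risk_nonneg (α := α) (θ n)]

theorem lyap_succ_add_risk_le (hγ : 0 ≤ γ) (hθ : ∀ n, θ (n + 1) = θ n - γ • grad H α (θ n))
    (hγV : γ * (4 * lyap H α (θ 0) + 2) ≤ 1) (n : ℕ) :
    lyap H α (θ (n + 1)) + 4 * γ * risk H α (θ n) ≤ lyap H α (θ n) := by
  rw [hθ]
  exact lyap_sub_smul_grad_add_le (θ n) hγ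
    ((mul_le_mul_of_nonneg_left (by linarith [lyap_le_lyap_zero hγ hθ hγV n]) hγ).trans hγV)

theorem four_mul_risk_le_lyap_zero (hγ : 0 ≤ γ) (hθ : ∀ n, θ (n + 1) = θ n - γ • grad H α (θ n))
    (hγV : γ * (4 * lyap H α (θ 0) + 2) ≤ 1) (n : ℕ) :
    4 * γ * risk H α (θ n) ≤ lyap H α (θ 0) := by
  linarith [lyap_succ_add_risk_le hγ hθ hγV n, lyap_nonneg (α := α) (θ (n + 1)),
    lyap_le_lyap_zero hγ hθ hγV n]

theorem tendsto_risk_zero (hγ : 0 < γ) (hθ : ∀ n, θ (n + 1) = θ n - γ • grad H α (θ n))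
    (hγV : γ * (4 * lyap H α (θ 0) + 2) ≤ 1) :
    Filter.Tendsto (fun n => risk H α (θ n)) Filter.atTop (nhds 0) :=
  (summable_of_succ_add_mul_le (by positivity) (fun _ => lyap_nonneg _) (fun _ => risk_nonneg _)
    (lyap_succ_add_risk_le hγ.le hθ hγV)).tendsto_atTop_zero

end GradientDescent

theorem lyap_le_of_forall_mem_Icc {H : ℕ} {α c : ℝ} {φ : EuclideanSpace ℝ (Fin (3*H+1))}
    (hφ : ∀ i, φ i ∈ Icc (-c) c) : lyap H α φ ≤ 3 * c ^ 2 * (3*H+1) + 8 * α ^ 2 := by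
  have hnorm := norm_sq_le_card_mul_sq_of_abs_le fun i => abs_le.2 (hφ i)
  rw [Fintype.card_fin] at hnorm
  push_cast at hnorm
  linarith [lyap_le (α := α) φ]

theorem gd_random_initialization_general (H : ℕ) (α : ℝ)
    (c γ : ℝ) (hγ : 0 < γ)
    (Ω : Type*) [MeasurableSpace Ω] (P : Measure Ω) [IsProbabilityMeasure P]
    (Θ : Ω → ℕ → EuclideanSpace ℝ (Fin (3*H+1)))
    (hmeas : ∀ n : ℕ, Measurable (fun ω => Θ ω n))
    (hinit : ∀ ω : Ω, ∀ i : Fin (3*H+1), Θ ω 0 i ∈ Set.Icc (-c) c)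
    (hrec : ∀ (ω : Ω) (n : ℕ), Θ ω (n+1) = Θ ω n - γ • grad H α (Θ ω n))
    (hγsmall : γ ≤ (12 * c^2 * (3*H+1) + 32 * α^2 + 2)⁻¹) :
    (∀ (ω : Ω) (n : ℕ), ‖Θ ω n‖ ≤ Real.sqrt (3 * c^2 * (3*H+1) + 8 * α^2)) ∧
    (∀ ω : Ω, Filter.Tendsto (fun n => risk H α (Θ ω n)) Filter.atTop (nhds 0)) ∧
    Filter.Tendsto (fun n => ∫ ω, risk H α (Θ ω n) ∂P) Filter.atTop (nhds 0) := by
  set B := 3 * c ^ 2 * (3*H+1) + 8 * α ^ 2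
  have hV₀ : ∀ ω, lyap H α (Θ ω 0) ≤ B := fun ω => lyap_le_of_forall_mem_Icc (hinit ω)
  have hγV : ∀ ω, γ * (4 * lyap H α (Θ ω 0) + 2) ≤ 1 := fun ω => by
    have hK : 0 < 12 * c ^ 2 * (3*H+1) + 32 * α ^ 2 + 2 := by positivity
    calc γ * (4 * lyap H α (Θ ω 0) + 2) ≤ γ * (12 * c ^ 2 * (3*H+1) + 32 * α ^ 2 + 2) := by
          gcongr; linarith [hV₀ ω]
      _ ≤ 1 := (mul_le_mul_of_nonneg_right hγsmall hK.le).trans_eq (inv_mul_cancel₀ hK.ne')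
  have hlim := fun ω => tendsto_risk_zero hγ (hrec ω) (hγV ω)
  refine ⟨fun ω n => ?_, hlim, ?_⟩
  · rw [Real.le_sqrt (norm_nonneg _) (by positivity)]
    exact (norm_sq_le_lyap _).trans ((lyap_le_lyap_zero hγ.le (hrec ω) (hγV ω) n).trans (hV₀ ω))
  · have hbound : ∀ n ω, ‖risk H α (Θ ω n)‖ ≤ B / (4 * γ) := fun n ω => by
      rw [Real.norm_of_nonneg (risk_nonneg _), le_div_iff₀' (by positivity)]
      exact (four_mul_risk_le_lyap_zero hγ.le (hrec ω) (hγV ω) n).trans (hV₀ ω)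
    simpa using tendsto_integral_of_dominated_convergence (fun _ => B / (4 * γ))
      (fun n => (continuous_risk.measurable.comp (hmeas n)).aestronglyMeasurable)
      (integrable_const _) (fun n => ae_of_all _ (hbound n)) (ae_of_all _ hlim)

theorem gd_random_initialization (H : ℕ) (hH : 0 < H) (α : ℝ)
    (c γ : ℝ) (hc : 0 < c) (hγ : 0 < γ)
    (Ω : Type*) [MeasurableSpace Ω] (P : Measure Ω) [IsProbabilityMeasure P]
    (Θ : Ω → ℕ → EuclideanSpace ℝ (Fin (3*H+1)))
    (hmeas : ∀ n : ℕ, Measurable (fun ω => Θ ω n))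
    (hinit : ∀ ω : Ω, ∀ i : Fin (3*H+1), Θ ω 0 i ∈ Set.Icc (-c) c)
    (hrec : ∀ (ω : Ω) (n : ℕ), Θ ω (n+1) = Θ ω n - γ • grad H α (Θ ω n))
    (hγsmall : γ ≤ (12 * c^2 * (3*H+1) + 32 * α^2 + 2)⁻¹) :
    (∀ (ω : Ω) (n : ℕ), ‖Θ ω n‖ ≤ Real.sqrt (3 * c^2 * (3*H+1) + 8 * α^2)) ∧
    (∀ ω : Ω, Filter.Tendsto (fun n => risk H α (Θ ω n)) Filter.atTop (nhds 0)) ∧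
    Filter.Tendsto (fun n => ∫ ω, risk H α (Θ ω n) ∂P) Filter.atTop (nhds 0) :=
  gd_random_initialization_general H α c γ hγ Ω P Θ hmeas hinit hrec hγsmall
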